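/- Functional characterization of IS models (discrete version): let η : 𝒳 → 𝒰 between finite sets and let μ be a joint distribution of (X,Y) with Y in finite 𝒴. Then X and Y are conditionally independent given η(X) if and only if there exists a measurable function f : [0,1] × 𝒰 → 𝒴 such that for every x with μ_X(x) > 0, the conditional distribution of Y given X = x equals the law of f(W, η(x)) where W is uniform on [0,1]. -/

import Mathlib

open Finset

noncomputable section

/-- Marginal distribution of the first coordinate of a joint distribution. -/
def margX {X Y : Type*} [Fintype Y] (μ : X → Y → ℝ) (x : X) : ℝ := ∑ y, μ x y

/-- Marginal distribution of the second coordinate. -/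
def margY {X Y : Type*} [Fintype X] (μ : X → Y → ℝ) (y : Y) : ℝ := ∑ x, μ x y

/-- Distribution of `U = η X`. -/
def margU {X Y U : Type*} [Fintype X] [Fintype Y] [DecidableEq U]
    (μ : X → Y → ℝ) (η : X → U) (u : U) : ℝ :=
  ∑ x, if η x = u then margX μ x else 0

/-- Joint probability `P(Y = y, η X = u)`. -/
def margYU {X Y U : Type*} [Fintype X] [DecidableEq U]
    (μ : X → Y → ℝ) (η : X → U) (y : Y) (u : U) : ℝ :=
  ∑ x, if η x = u then μ x y else 0

/-- Joint distribution of the pair `(η X, Y)`. -/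
def jointUY {X Y U : Type*} [Fintype X] [DecidableEq U]
    (μ : X → Y → ℝ) (η : X → U) : U → Y → ℝ :=
  fun u y => margYU μ η y u

/-- Shannon mutual information `I(X;Y)` of a joint distribution (natural log). -/
def MI {X Y : Type*} [Fintype X] [Fintype Y] (μ : X → Y → ℝ) : ℝ :=
  ∑ x, ∑ y, μ x y * Real.log (μ x y / (margX μ x * margY μ y))

/-- Conditional Shannon entropy `H(Y|X)`. -/
def condEnt {X Y : Type*} [Fintype X] [Fintype Y] (μ : X → Y → ℝ) : ℝ :=
  -∑ x, ∑ y, μ x y * Real.log (μ x y / margX μ x)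

/-- Conditional mutual information `I(X;Y|U)` where `U = η X` is a deterministic
function of `X`. -/
def condMI {X Y U : Type*} [Fintype X] [Fintype Y] [DecidableEq U]
    (μ : X → Y → ℝ) (η : X → U) : ℝ :=
  ∑ x, ∑ y, μ x y *
    Real.log (μ x y * margU μ η (η x) / (margX μ x * margYU μ η y (η x)))

/-- `μ` is a probability distribution on `X × Y`. -/
def IsDist {X Y : Type*} [Fintype X] [Fintype Y] (μ : X → Y → ℝ) : Prop :=
  (∀ x y, 0 ≤ μ x y) ∧ ∑ x, ∑ y, μ x y = 1

/-- `X` and `Y` are conditionally independent given `U = η X`: for every `u` with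
`P(U = u) > 0`, `P(X = x, Y = y | U = u) = P(X = x | U = u) · P(Y = y | U = u)`
(stated multiplied through by `P(U = u)²`). -/
def CondIndep {X Y U : Type*} [Fintype X] [Fintype Y] [DecidableEq U]
    (μ : X → Y → ℝ) (η : X → U) : Prop :=
  ∀ u, 0 < margU μ η u → ∀ x y,
    (if η x = u then μ x y else 0) * margU μ η u =
      (if η x = u then margX μ x else 0) * margYU μ η y u

/-- Cross-entropy risk `E_{(X,Y)∼μ}[− log v(Y|X)]` of a predictive conditional
distribution `v`. -/
def risk {X Y : Type*} [Fintype X] [Fintype Y] (μ : X → Y → ℝ) (v : X → Y → ℝ) : ℝ :=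
  ∑ x, ∑ y, μ x y * (-Real.log (v x y))

/-- Kullback–Leibler divergence between two joint distributions on `X × Y`. -/
def KL {X Y : Type*} [Fintype X] [Fintype Y] (μ ν : X → Y → ℝ) : ℝ :=
  ∑ x, ∑ y, μ x y * Real.log (μ x y / ν x y)

/-- Averaged conditional KL divergence `D(μ_{Y|X} ‖ v | μ_X)`. -/
def avgKL {X Y : Type*} [Fintype X] [Fintype Y] (μ : X → Y → ℝ) (v : X → Y → ℝ) : ℝ :=
  ∑ x, margX μ x * ∑ y,
    (μ x y / margX μ x) * Real.log ((μ x y / margX μ x) / v x y)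

/-- Averaged conditional KL divergence in the latent domain:
`D(μ_{Y|U} ‖ v | μ_U)` for the encoder `η`. -/
def decKL {X Y U : Type*} [Fintype X] [Fintype Y] [Fintype U] [DecidableEq U]
    (μ : X → Y → ℝ) (η : X → U) (v : U → Y → ℝ) : ℝ :=
  ∑ u, margU μ η u * ∑ y,
    (margYU μ η y u / margU μ η u) *
      Real.log ((margYU μ η y u / margU μ η u) / v u y)


/-!
Conditional independence of `X` and `Y` given `η X` says precisely that the conditional law of
`Y` given `X = x` is the conditional law of `Y` given `η X = η x`. Every probability vector on
the finite set `𝒴` is the image of Lebesgue measure on `[0,1]` under a measurable map (the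
representation theorem for probability measures on standard Borel spaces), which produces `f`.
Conversely, such an `f` factorises `μ x y = μ_X x · P(f(W, η x) = y)`, and any joint law that
factorises through `η` in this way is conditionally independent given `η X`.
-/

open MeasureTheory Set

theorem exists_measurable_map_restrict_Icc_eq {Y : Type*} [MeasurableSpace Y]
    [StandardBorelSpace Y] [Nonempty Y] (ν : Measure Y) [IsProbabilityMeasure ν] :
    ∃ g : ℝ → Y, Measurable g ∧ (volume.restrict (Icc (0 : ℝ) 1)).map g = ν := by
  obtain ⟨f, hf, hfν⟩ := ν.exists_measurable_map_eq
  refine ⟨f ∘ projIcc 0 1 zero_le_one, hf.comp continuous_projIcc.measurable, ?_⟩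
  rw [← map_comap_subtype_coe measurableSet_Icc, ← unitInterval.volume_def,
    Measure.map_map (hf.comp continuous_projIcc.measurable) measurable_subtype_coe]
  have hcomp : (f ∘ projIcc 0 1 zero_le_one) ∘ Subtype.val = f := funext fun t => by simp
  rw [hcomp, hfν]

theorem exists_levelSet_volume_eq {Y : Type*} [Fintype Y] (p : Y → ℝ) (hp0 : ∀ y, 0 ≤ p y)
    (hp1 : ∑ y, p y = 1) :
    ∃ g : ℝ → Y, (∀ y, MeasurableSet {w : ℝ | g w = y}) ∧
      ∀ y, (volume.restrict (Icc (0 : ℝ) 1) {w | g w = y}).toReal = p y := by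
  let _ : MeasurableSpace Y := ⊤
  let _ : TopologicalSpace Y := ⊥
  have : DiscreteTopology Y := ⟨rfl⟩
  have : BorelSpace Y := ⟨borel_eq_top_of_discrete.symm⟩
  have : Nonempty Y := by
    by_contra h
    simp [not_nonempty_iff.mp h] at hp1
  have hsum : ∑ y, ENNReal.ofReal (p y) = 1 := by
    rw [← ENNReal.ofReal_sum_of_nonneg fun y _ => hp0 y, hp1, ENNReal.ofReal_one]
  obtain ⟨g, hg, hgp⟩ :=
    exists_measurable_map_restrict_Icc_eq (PMF.ofFintype _ hsum).toMeasure
  refine ⟨g, fun y => hg (measurableSet_singleton y), fun y => ?_⟩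
  rw [show {w | g w = y} = g ⁻¹' {y} from rfl,
    ← Measure.map_apply hg (measurableSet_singleton y), hgp,
    PMF.toMeasure_apply_singleton _ _ (measurableSet_singleton y), PMF.ofFintype_apply,
    ENNReal.toReal_ofReal (hp0 y)]

theorem margX_nonneg {X Y : Type*} [Fintype Y] {μ : X → Y → ℝ} (hμ : ∀ x y, 0 ≤ μ x y)
    (x : X) : 0 ≤ margX μ x :=
  sum_nonneg fun y _ => hμ x y

theorem eq_margX_mul_of_div_eq {X Y : Type*} [Fintype Y] {μ p : X → Y → ℝ}
    (hμ : ∀ x y, 0 ≤ μ x y) (h : ∀ x, 0 < margX μ x → ∀ y, μ x y / margX μ x = p x y)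
    (x : X) (y : Y) : μ x y = margX μ x * p x y := by
  rcases (margX_nonneg hμ x).eq_or_lt with hx | hx
  · rw [← hx, zero_mul]
    exact (sum_eq_zero_iff_of_nonneg fun y _ => hμ x y).mp hx.symm y (mem_univ y)
  · rw [← h x hx y]
    field_simp

theorem IsDist.nonempty_right {X Y : Type*} [Fintype X] [Fintype Y] {μ : X → Y → ℝ}
    (hμ : IsDist μ) : Nonempty Y := by
  by_contra h
  simpa [not_nonempty_iff.mp h] using hμ.2

theorem margYU_nonneg {X Y U : Type*} [Fintype X] [DecidableEq U] {μ : X → Y → ℝ}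
    (hμ : ∀ x y, 0 ≤ μ x y) (η : X → U) (y : Y) (u : U) : 0 ≤ margYU μ η y u :=
  sum_nonneg fun x _ => by split_ifs <;> simp [hμ]

section Marginals

variable {X Y U : Type*} [Fintype X] [Fintype Y] [DecidableEq U] {μ : X → Y → ℝ}

theorem margX_le_margU (hμ : ∀ x y, 0 ≤ μ x y) (η : X → U) (x : X) :
    margX μ x ≤ margU μ η (η x) := by
  have hterm (x' : X) : 0 ≤ if η x' = η x then margX μ x' else 0 := by
    split_ifs
    exacts [margX_nonneg hμ x', le_rfl]
  simpa [margU] using single_le_sum (fun x' _ => hterm x') (mem_univ x)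

theorem sum_margYU (η : X → U) (u : U) :
    ∑ y, margYU μ η y u = margU μ η u := by
  unfold margYU margU margX
  rw [sum_comm]
  exact sum_congr rfl fun x _ => by split_ifs <;> simp

theorem CondIndep.div_margX_eq {η : X → U} (hci : CondIndep μ η) (hμ : ∀ x y, 0 ≤ μ x y)
    {x : X} (hx : 0 < margX μ x) (y : Y) :
    μ x y / margX μ x = margYU μ η y (η x) / margU μ η (η x) := by
  have hu := hx.trans_le (margX_le_margU hμ η x)
  have := hci (η x) hu x y
  simp only [if_true] at this
  rw [div_eq_div_iff hx.ne' hu.ne']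
  linarith

theorem condIndep_of_eq_margX_mul {η : X → U} {g : U → Y → ℝ}
    (h : ∀ x y, μ x y = margX μ x * g (η x) y) : CondIndep μ η := by
  intro u _ x y
  have hYU : margYU μ η y u = margU μ η u * g u y := by
    unfold margYU margU
    rw [sum_mul]
    refine sum_congr rfl fun x' _ => ?_
    split_ifs with hx'
    · rw [h, hx']
    · simp
  split_ifs with hx
  · rw [h, hx, hYU]
    ring
  · simp

theorem exists_levelSet_volume_eq_condLaw [Nonempty Y] (hμ : ∀ x y, 0 ≤ μ x y) (η : X → U)
    (u : U) :
    ∃ g : ℝ → Y, (∀ y, MeasurableSet {w : ℝ | g w = y}) ∧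
      (0 < margU μ η u → ∀ y, (volume.restrict (Icc (0 : ℝ) 1) {w | g w = y}).toReal =
        margYU μ η y u / margU μ η u) := by
  by_cases hu : 0 < margU μ η u
  · obtain ⟨g, hg, hgp⟩ :=
      exists_levelSet_volume_eq (fun y => margYU μ η y u / margU μ η u)
        (fun y => div_nonneg (margYU_nonneg hμ η y u) hu.le)
        (by rw [← sum_div, sum_margYU, div_self hu.ne'])
    exact ⟨g, hg, fun _ => hgp⟩
  · exact ⟨fun _ => Classical.arbitrary Y, fun _ => MeasurableSet.const _,
      fun h => absurd h hu⟩

end Marginals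

theorem stmt14_general {X Y U : Type*} [Fintype X] [Fintype Y]
    [DecidableEq U]
    (μ : X → Y → ℝ) (η : X → U) (hμ : IsDist μ) :
    CondIndep μ η ↔
      ∃ f : ℝ → U → Y,
        (∀ u y, MeasurableSet {w : ℝ | f w u = y}) ∧
          ∀ x, 0 < margX μ x → ∀ y,
            μ x y / margX μ x =
              ((MeasureTheory.volume.restrict (Set.Icc (0 : ℝ) 1))
                {w : ℝ | f w (η x) = y}).toReal := by
  constructor
  · intro hci
    have := hμ.nonempty_right
    choose g hg_meas hg_law using exists_levelSet_volume_eq_condLaw hμ.1 η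
    refine ⟨fun w u => g u w, hg_meas, fun x hx y => ?_⟩
    rw [hci.div_margX_eq hμ.1 hx, hg_law _ (hx.trans_le (margX_le_margU hμ.1 η x))]
  · rintro ⟨f, -, hf⟩
    exact condIndep_of_eq_margX_mul
      (g := fun u y => (volume.restrict (Icc 0 1) {w | f w u = y}).toReal)
      (eq_margX_mul_of_div_eq hμ.1 hf)

/-- functional characterization of IS models. `X ⟂ Y | η(X)` iff
there is a measurable `f : [0,1] × 𝒰 → 𝒴` such that for every `x` of positive
probability, the conditional law of `Y` given `X = x` is the law of `f(W, η(x))`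
with `W ∼ Unif[0,1]`. -/
theorem stmt14 {X Y U : Type*} [Fintype X] [Fintype Y] [Fintype U]
    [DecidableEq U] [DecidableEq Y]
    (μ : X → Y → ℝ) (η : X → U) (hμ : IsDist μ) :
    CondIndep μ η ↔
      ∃ f : ℝ → U → Y,
        (∀ u y, MeasurableSet {w : ℝ | f w u = y}) ∧
          ∀ x, 0 < margX μ x → ∀ y,
            μ x y / margX μ x =
              ((MeasureTheory.volume.restrict (Set.Icc (0 : ℝ) 1))
                {w : ℝ | f w (η x) = y}).toReal :=
  stmt14_general μ η hμ
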